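/- arXiv:1203.3735 — 2 statements merged into one kernel-verified Lean document; each statement's English description precedes it below -/
import Mathlib

section
/- Let 𝔏 be a finite collection of lines in ℝ³, let k ≥ 1, and let x be a joint for 𝔏 of multiplicity N(x) = N such that x lies on at most 2k lines of 𝔏. Let 𝔏' ⊆ 𝔏 be a subcollection such that either x is not a joint for 𝔏', or x is a joint for 𝔏' of multiplicity at most N/2. Then at least N/(1000·k²) lines of 𝔏 ∖ 𝔏' pass through x. -/
/-! Among the `N` triples of lines through `x` that witness the multiplicity, at most `N / 2` lie
inside `𝔏'`; each of the others contains a line of `𝔏 \ 𝔏'` through `x`. A fixed line through `x`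
belongs to at most `(2k choose 2) ≤ 2k²` triples of lines through `x`, so at least `N / (4k²)`
lines of `𝔏 \ 𝔏'` pass through `x`. -/

/-- A line in `ℝⁿ`: a set of the form `{a + t • v : t ∈ ℝ}` with `v ≠ 0`. -/
def IsLine (n : ℕ) (ℓ : Set (Fin n → ℝ)) : Prop :=
  ∃ a v : Fin n → ℝ, v ≠ 0 ∧ ℓ = {p | ∃ t : ℝ, p = a + t • v}

/-- `v` is a direction vector of the line `ℓ`. -/
def HasDir (n : ℕ) (ℓ : Set (Fin n → ℝ)) (v : Fin n → ℝ) : Prop :=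
  v ≠ 0 ∧ ∃ a : Fin n → ℝ, ℓ = {p | ∃ t : ℝ, p = a + t • v}

/-- `x` is a joint for the collection `𝔏` of lines. -/
def IsJoint (𝔏 : Finset (Set (Fin 3 → ℝ))) (x : Fin 3 → ℝ) : Prop :=
  ∃ ℓ₁ ∈ 𝔏, ∃ ℓ₂ ∈ 𝔏, ∃ ℓ₃ ∈ 𝔏, x ∈ ℓ₁ ∧ x ∈ ℓ₂ ∧ x ∈ ℓ₃ ∧
    ∃ v₁ v₂ v₃ : Fin 3 → ℝ, HasDir 3 ℓ₁ v₁ ∧ HasDir 3 ℓ₂ v₂ ∧ HasDir 3 ℓ₃ v₃ ∧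
      LinearIndependent ℝ ![v₁, v₂, v₃]

open scoped Classical in
/-- The multiplicity `N(x)` of a joint `x`. -/
noncomputable def jointMult (𝔏 : Finset (Set (Fin 3 → ℝ))) (x : Fin 3 → ℝ) : ℕ :=
  ((𝔏.powersetCard 3).filter fun T =>
    ∃ ℓ₁ ℓ₂ ℓ₃ : Set (Fin 3 → ℝ), T = {ℓ₁, ℓ₂, ℓ₃} ∧ x ∈ ℓ₁ ∧ x ∈ ℓ₂ ∧ x ∈ ℓ₃ ∧
      ∃ v₁ v₂ v₃ : Fin 3 → ℝ, HasDir 3 ℓ₁ v₁ ∧ HasDir 3 ℓ₂ v₂ ∧ HasDir 3 ℓ₃ v₃ ∧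
        LinearIndependent ℝ ![v₁, v₂, v₃]).card

open scoped Classical in
/-- The number of lines of `𝔏` passing through `x`. -/
noncomputable def linesThrough (𝔏 : Finset (Set (Fin 3 → ℝ))) (x : Fin 3 → ℝ) : ℕ :=
  (𝔏.filter fun ℓ => x ∈ ℓ).card

namespace Finset

variable {α : Type*} [DecidableEq α] {A : Finset (Finset α)} {S : Finset α} {r : ℕ}

theorem card_filter_mem_le_choose (hA : A ⊆ S.powersetCard (r + 1)) (a : α) :
    (A.filter (a ∈ ·)).card ≤ S.card.choose r := by
  rw [← card_powersetCard]
  refine card_le_card_of_injOn (·.erase a) (fun T hT => ?_) (fun T hT T' hT' h => ?_)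
  · obtain ⟨hTA, haT⟩ := mem_filter.mp hT
    obtain ⟨hTS, hcard⟩ := mem_powersetCard.mp (hA hTA)
    exact mem_powersetCard.mpr
      ⟨(erase_subset a T).trans hTS, by rw [card_erase_of_mem haT, hcard]; rfl⟩
  · simpa [insert_erase (mem_filter.mp hT).2, insert_erase (mem_filter.mp hT').2] using
      congrArg (insert a) h

theorem card_filter_not_subset_le (hA : A ⊆ S.powersetCard (r + 1)) (U : Finset α) :
    (A.filter (¬ · ⊆ U)).card ≤ (S \ U).card * S.card.choose r := by
  have hcover : A.filter (¬ · ⊆ U) ⊆ (S \ U).biUnion fun a => A.filter (a ∈ ·) := by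
    intro T hT
    obtain ⟨hTA, hTU⟩ := mem_filter.mp hT
    obtain ⟨a, haT, haU⟩ := not_subset.mp hTU
    exact mem_biUnion.mpr
      ⟨a, mem_sdiff.mpr ⟨(mem_powersetCard.mp (hA hTA)).1 haT, haU⟩, mem_filter.mpr ⟨hTA, haT⟩⟩
  calc (A.filter (¬ · ⊆ U)).card
      ≤ ∑ a ∈ S \ U, (A.filter (a ∈ ·)).card := (card_le_card hcover).trans card_biUnion_le
    _ ≤ (S \ U).card * S.card.choose r := by
      simpa using sum_le_card_nsmul _ _ _ fun a _ => card_filter_mem_le_choose hA a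

end Finset

open Finset

def IsJointTriple (x : Fin 3 → ℝ) (T : Finset (Set (Fin 3 → ℝ))) : Prop :=
  ∃ ℓ₁ ℓ₂ ℓ₃ : Set (Fin 3 → ℝ), T = {ℓ₁, ℓ₂, ℓ₃} ∧ x ∈ ℓ₁ ∧ x ∈ ℓ₂ ∧ x ∈ ℓ₃ ∧
    ∃ v₁ v₂ v₃ : Fin 3 → ℝ, HasDir 3 ℓ₁ v₁ ∧ HasDir 3 ℓ₂ v₂ ∧ HasDir 3 ℓ₃ v₃ ∧
      LinearIndependent ℝ ![v₁, v₂, v₃]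

open scoped Classical in
noncomputable def jointTriples (𝔏 : Finset (Set (Fin 3 → ℝ))) (x : Fin 3 → ℝ) :
    Finset (Finset (Set (Fin 3 → ℝ))) :=
  (𝔏.powersetCard 3).filter (IsJointTriple x)

section

variable {𝔏 𝔏' : Finset (Set (Fin 3 → ℝ))} {x : Fin 3 → ℝ}

theorem card_jointTriples : (jointTriples 𝔏 x).card = jointMult 𝔏 x := rfl

theorem IsJointTriple.forall_mem {T : Finset (Set (Fin 3 → ℝ))} (hT : IsJointTriple x T) :
    ∀ ℓ ∈ T, x ∈ ℓ := by
  obtain ⟨ℓ₁, ℓ₂, ℓ₃, rfl, h₁, h₂, h₃, -⟩ := hT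
  simp only [mem_insert, mem_singleton, forall_eq_or_imp, forall_eq]
  exact ⟨h₁, h₂, h₃⟩

open scoped Classical in
theorem jointTriples_subset_powersetCard :
    jointTriples 𝔏 x ⊆ (𝔏.filter (x ∈ ·)).powersetCard 3 := by
  intro T hT
  obtain ⟨hT, hJ⟩ := mem_filter.mp hT
  obtain ⟨h𝔏, hcard⟩ := mem_powersetCard.mp hT
  exact mem_powersetCard.mpr ⟨fun ℓ hℓ => mem_filter.mpr ⟨h𝔏 hℓ, hJ.forall_mem ℓ hℓ⟩, hcard⟩

open scoped Classical in
theorem jointMult_eq_zero_of_not_isJoint (h : ¬ IsJoint 𝔏 x) : jointMult 𝔏 x = 0 := by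
  rw [← card_jointTriples, card_eq_zero, jointTriples, filter_eq_empty_iff]
  rintro T hT ⟨ℓ₁, ℓ₂, ℓ₃, rfl, h₁, h₂, h₃, hdir⟩
  have h𝔏 := (mem_powersetCard.mp hT).1
  exact h ⟨ℓ₁, h𝔏 (by simp), ℓ₂, h𝔏 (by simp), ℓ₃, h𝔏 (by simp), h₁, h₂, h₃, hdir⟩

open scoped Classical in
theorem filter_subset_jointTriples :
    (jointTriples 𝔏 x).filter (· ⊆ 𝔏') ⊆ jointTriples 𝔏' x := by
  intro T hT
  obtain ⟨hTJ, hT𝔏'⟩ := mem_filter.mp hT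
  obtain ⟨hT, hJ⟩ := mem_filter.mp hTJ
  exact mem_filter.mpr ⟨mem_powersetCard.mpr ⟨hT𝔏', (mem_powersetCard.mp hT).2⟩, hJ⟩

theorem jointMult_le_add_linesThrough_sdiff_mul :
    jointMult 𝔏 x ≤
      jointMult 𝔏' x + linesThrough (𝔏 \ 𝔏') x * (linesThrough 𝔏 x).choose 2 := by
  classical
  have hlines : linesThrough (𝔏 \ 𝔏') x = (𝔏.filter (x ∈ ·) \ 𝔏').card := by
    unfold linesThrough
    congr 1
    ext ℓ
    simp only [mem_filter, mem_sdiff]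
    tauto
  rw [← card_jointTriples, ← card_filter_add_card_filter_not (p := (· ⊆ 𝔏')), hlines]
  exact add_le_add (card_le_card filter_subset_jointTriples)
    (card_filter_not_subset_le jointTriples_subset_powersetCard 𝔏')

end

open scoped Classical in
theorem joint_lines_outside_subcollection_general
    (𝔏 𝔏' : Finset (Set (Fin 3 → ℝ)))
    (k : ℕ) (x : Fin 3 → ℝ) (N : ℕ)
    (hN : jointMult 𝔏 x = N)
    (hlines : linesThrough 𝔏 x ≤ 2 * k)
    (h' : ¬ IsJoint 𝔏' x ∨ (jointMult 𝔏' x : ℝ) ≤ (N : ℝ) / 2) :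
    (N : ℝ) / (1000 * (k : ℝ) ^ 2) ≤ (linesThrough (𝔏 \ 𝔏') x : ℝ) := by
  have hsub : (jointMult 𝔏' x : ℝ) ≤ N / 2 := by
    rcases h' with h | h
    · rw [jointMult_eq_zero_of_not_isJoint h, Nat.cast_zero]
      positivity
    · exact h
  have hsplit : (N : ℝ) ≤
      jointMult 𝔏' x + linesThrough (𝔏 \ 𝔏') x * ((linesThrough 𝔏 x).choose 2 : ℝ) := by
    rw [← hN]
    exact_mod_cast jointMult_le_add_linesThrough_sdiff_mul
  have hchoose : ((linesThrough 𝔏 x).choose 2 : ℝ) ≤ 2 * k ^ 2 := by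
    have hm : (linesThrough 𝔏 x : ℝ) ≤ 2 * k := by exact_mod_cast hlines
    calc ((linesThrough 𝔏 x).choose 2 : ℝ) ≤ (linesThrough 𝔏 x : ℝ) ^ 2 / 2 := by
          simpa using Nat.choose_le_pow_div (α := ℝ) 2 (linesThrough 𝔏 x)
      _ ≤ (2 * k) ^ 2 / 2 := by gcongr
      _ = 2 * k ^ 2 := by ring
  have hD : (0 : ℝ) ≤ linesThrough (𝔏 \ 𝔏') x := Nat.cast_nonneg _
  refine div_le_of_le_mul₀ (by positivity) hD ?_
  nlinarith [mul_le_mul_of_nonneg_left hchoose hD, sq_nonneg (k : ℝ)]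

open scoped Classical in
/-- If `x` is a joint of multiplicity `N` for `𝔏`, lying on at most `2k` lines of `𝔏`,
and `𝔏' ⊆ 𝔏` is such that `x` is not a joint for `𝔏'`, or is a joint for `𝔏'` of
multiplicity at most `N/2`, then at least `N/(1000 k²)` lines of `𝔏 \ 𝔏'` pass
through `x`. -/
theorem joint_lines_outside_subcollection
    (𝔏 𝔏' : Finset (Set (Fin 3 → ℝ))) (h𝔏 : ∀ ℓ ∈ 𝔏, IsLine 3 ℓ)
    (hsub : 𝔏' ⊆ 𝔏) (k : ℕ) (hk : 1 ≤ k) (x : Fin 3 → ℝ) (N : ℕ)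
    (hjoint : IsJoint 𝔏 x) (hN : jointMult 𝔏 x = N)
    (hlines : linesThrough 𝔏 x ≤ 2 * k)
    (h' : ¬ IsJoint 𝔏' x ∨ (jointMult 𝔏' x : ℝ) ≤ (N : ℝ) / 2) :
    (N : ℝ) / (1000 * (k : ℝ) ^ 2) ≤ (linesThrough (𝔏 \ 𝔏') x : ℝ) :=
  joint_lines_outside_subcollection_general 𝔏 𝔏' k x N hN hlines h'
end

section
/- Let 𝔏 be a finite collection of lines in ℝ³, let k ≥ 1, and let x be a joint for 𝔏 of multiplicity N such that x lies on at most 2k lines of 𝔏. Then for every plane H (2-dimensional affine subspace of ℝ³) containing x, at least N/(1000·k²) lines of 𝔏 pass through x and are not contained in H. -/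
/-- A plane in `ℝ³`: a 2-dimensional affine subspace
`{a + s • u + t • w : s, t ∈ ℝ}` with `u, w` linearly independent. -/
def IsPlane (H : Set (Fin 3 → ℝ)) : Prop :=
  ∃ a u w : Fin 3 → ℝ, LinearIndependent ℝ ![u, w] ∧
    H = {p | ∃ s t : ℝ, p = a + s • u + t • w}

/-!
Three lines through `x` with linearly independent directions cannot all lie in a plane `H`:
their directions would lie in the 2-dimensional direction space of `H`. Hence each of the `N`
triples counted by the multiplicity contains a line through `x` not contained in `H`, while a
fixed line lies in at most `C(2k, 2) ≤ 4k²` of these triples.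
-/

open Finset

lemma HasDir.mem_span_of_subset {n : ℕ} {ℓ : Set (Fin n → ℝ)} {v : Fin n → ℝ} (hv : HasDir n ℓ v)
    {a u w : Fin n → ℝ} (hℓ : ℓ ⊆ {p | ∃ s t : ℝ, p = a + s • u + t • w}) :
    v ∈ Submodule.span ℝ {u, w} := by
  obtain ⟨-, b, rfl⟩ := hv
  obtain ⟨s₀, t₀, h₀⟩ := hℓ ⟨0, rfl⟩
  obtain ⟨s₁, t₁, h₁⟩ := hℓ ⟨1, rfl⟩
  have hv : v = (s₁ - s₀) • u + (t₁ - t₀) • w := by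
    linear_combination (norm := module) h₁ - h₀
  rw [hv, Submodule.mem_span_pair]
  exact ⟨_, _, rfl⟩

lemma exists_not_subset_of_isPlane {ℓ₁ ℓ₂ ℓ₃ : Set (Fin 3 → ℝ)} {v₁ v₂ v₃ : Fin 3 → ℝ}
    (h₁ : HasDir 3 ℓ₁ v₁) (h₂ : HasDir 3 ℓ₂ v₂) (h₃ : HasDir 3 ℓ₃ v₃)
    (hv : LinearIndependent ℝ ![v₁, v₂, v₃]) {H : Set (Fin 3 → ℝ)} (hH : IsPlane H) :
    ¬ ℓ₁ ⊆ H ∨ ¬ ℓ₂ ⊆ H ∨ ¬ ℓ₃ ⊆ H := by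
  by_contra! hsub
  obtain ⟨a, u, w, -, rfl⟩ := hH
  have hspan : Submodule.span ℝ (Set.range ![v₁, v₂, v₃]) ≤ Submodule.span ℝ {u, w} := by
    rw [Submodule.span_le, Set.range_subset_iff]
    intro i
    fin_cases i
    exacts [h₁.mem_span_of_subset hsub.1, h₂.mem_span_of_subset hsub.2.1,
      h₃.mem_span_of_subset hsub.2.2]
  have hrank := (Submodule.finrank_mono hspan).trans
    (finrank_span_le_card ({u, w} : Set (Fin 3 → ℝ)))
  rw [finrank_span_eq_card hv, Fintype.card_fin, Set.toFinset_insert,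
    Set.toFinset_singleton] at hrank
  exact absurd (hrank.trans card_le_two) (by decide)

namespace Finset

variable {α : Type*} [DecidableEq α] {S : Finset (Finset α)} {P : Finset α} {r : ℕ}

lemma card_filter_mem_le_choose_s3 (hS : S ⊆ P.powersetCard (r + 1)) (b : α) :
    #{T ∈ S | b ∈ T} ≤ (#P).choose r := by
  rw [← card_powersetCard]
  refine card_le_card_of_injOn (·.erase b) (fun T hT => ?_) (fun T₁ hT₁ T₂ hT₂ h => ?_)
  · obtain ⟨hTS, hbT⟩ := mem_filter.1 hT
    obtain ⟨hTP, hcard⟩ := mem_powersetCard.1 (hS hTS)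
    refine mem_powersetCard.2 ⟨(erase_subset b T).trans hTP, ?_⟩
    rw [card_erase_of_mem hbT, hcard, Nat.add_sub_cancel]
  · rw [← insert_erase (mem_filter.1 hT₁).2, ← insert_erase (mem_filter.1 hT₂).2]
    exact congrArg (insert b) h

lemma card_le_card_mul_choose_of_forall_exists_mem (hS : S ⊆ P.powersetCard (r + 1))
    {B : Finset α} (hB : ∀ T ∈ S, ∃ b ∈ B, b ∈ T) : #S ≤ #B * (#P).choose r :=
  calc #S ≤ #(B.biUnion fun b => {T ∈ S | b ∈ T}) := card_le_card fun T hT => by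
        obtain ⟨b, hb, hbT⟩ := hB T hT
        exact mem_biUnion.2 ⟨b, hb, mem_filter.2 ⟨hT, hbT⟩⟩
    _ ≤ ∑ b ∈ B, #{T ∈ S | b ∈ T} := card_biUnion_le
    _ ≤ #B * (#P).choose r := by
        simpa using sum_le_card_nsmul B _ _ fun b _ => card_filter_mem_le_choose_s3 hS b

end Finset

open scoped Classical in
lemma jointMult_le_card_mul_choose (𝔏 : Finset (Set (Fin 3 → ℝ))) (x : Fin 3 → ℝ)
    {H : Set (Fin 3 → ℝ)} (hH : IsPlane H) :
    jointMult 𝔏 x ≤ #{ℓ ∈ 𝔏 | x ∈ ℓ ∧ ¬ ℓ ⊆ H} * (linesThrough 𝔏 x).choose 2 := by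
  refine card_le_card_mul_choose_of_forall_exists_mem (fun T hT => ?_) fun T hT => ?_
  · obtain ⟨hT, ℓ₁, ℓ₂, ℓ₃, rfl, hx₁, hx₂, hx₃, -⟩ := mem_filter.1 hT
    obtain ⟨hT𝔏, hcard⟩ := mem_powersetCard.1 hT
    refine mem_powersetCard.2 ⟨fun ℓ hℓ => mem_filter.2 ⟨hT𝔏 hℓ, ?_⟩, hcard⟩
    simp only [mem_insert, mem_singleton] at hℓ
    rcases hℓ with rfl | rfl | rfl <;> assumption
  · obtain ⟨hT, ℓ₁, ℓ₂, ℓ₃, rfl, hx₁, hx₂, hx₃, v₁, v₂, v₃, h₁, h₂, h₃, hv⟩ := mem_filter.1 hT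
    have hT𝔏 := (mem_powersetCard.1 hT).1
    rcases exists_not_subset_of_isPlane h₁ h₂ h₃ hv hH with hH₁ | hH₂ | hH₃
    · exact ⟨ℓ₁, mem_filter.2 ⟨hT𝔏 (by simp), hx₁, hH₁⟩, by simp⟩
    · exact ⟨ℓ₂, mem_filter.2 ⟨hT𝔏 (by simp), hx₂, hH₂⟩, by simp⟩
    · exact ⟨ℓ₃, mem_filter.2 ⟨hT𝔏 (by simp), hx₃, hH₃⟩, by simp⟩

open scoped Classical in
theorem joint_lines_outside_plane_general
    (𝔏 : Finset (Set (Fin 3 → ℝ)))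
    (k : ℕ) (x : Fin 3 → ℝ) (N : ℕ)
    (hN : jointMult 𝔏 x = N)
    (hlines : linesThrough 𝔏 x ≤ 2 * k)
    (H : Set (Fin 3 → ℝ)) (hH : IsPlane H) :
    (N : ℝ) / (1000 * (k : ℝ) ^ 2) ≤
      ((𝔏.filter fun ℓ => x ∈ ℓ ∧ ¬ ℓ ⊆ H).card : ℝ) := by
  have hchoose : (linesThrough 𝔏 x).choose 2 ≤ 1000 * k ^ 2 :=
    calc (linesThrough 𝔏 x).choose 2 ≤ (2 * k).choose 2 := Nat.choose_le_choose 2 hlines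
      _ ≤ (2 * k) ^ 2 := Nat.choose_le_pow _ _
      _ ≤ 1000 * k ^ 2 := by nlinarith
  have hcount : N ≤ #{ℓ ∈ 𝔏 | x ∈ ℓ ∧ ¬ ℓ ⊆ H} * (1000 * k ^ 2) :=
    hN ▸ (jointMult_le_card_mul_choose 𝔏 x hH).trans (Nat.mul_le_mul_left _ hchoose)
  exact div_le_of_le_mul₀ (by positivity) (by positivity) (by exact_mod_cast hcount)

open scoped Classical in
/-- If `x` is a joint of multiplicity `N` for `𝔏`, lying on at most `2k` lines of `𝔏`,
then for every plane `H` containing `x`, at least `N/(1000 k²)` lines of `𝔏` pass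
through `x` and are not contained in `H`. -/
theorem joint_lines_outside_plane
    (𝔏 : Finset (Set (Fin 3 → ℝ))) (h𝔏 : ∀ ℓ ∈ 𝔏, IsLine 3 ℓ)
    (k : ℕ) (hk : 1 ≤ k) (x : Fin 3 → ℝ) (N : ℕ)
    (hjoint : IsJoint 𝔏 x) (hN : jointMult 𝔏 x = N)
    (hlines : linesThrough 𝔏 x ≤ 2 * k)
    (H : Set (Fin 3 → ℝ)) (hH : IsPlane H) (hxH : x ∈ H) :
    (N : ℝ) / (1000 * (k : ℝ) ^ 2) ≤
      ((𝔏.filter fun ℓ => x ∈ ℓ ∧ ¬ ℓ ⊆ H).card : ℝ) :=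
  joint_lines_outside_plane_general 𝔏 k x N hN hlines H hH
end
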